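/- arXiv:2204.10449 — 7 statements merged into one kernel-verified Lean document; each statement's English description precedes it below -/
import Mathlib

section
/- If a function f : U → ℝ on an open set U ⊆ ℝ^m has locally Lipschitz derivative (in particular if f is C^∞), then f is locally delta-convex. -/
/-!
On the compact set `closure Ω`, the locally Lipschitz derivative `f'` is `K`-Lipschitz for a
single `K`. Then `|(f' y - f' x) (y - x)| ≤ K ‖y - x‖²`, which is absorbed by the gradient `K x` of
`K/2 ‖x‖²`: the function `f + K/2 ‖·‖²` has a monotone derivative, hence is convex on the convex
set `Ω`, and `f = (f + K/2 ‖·‖²) - K/2 ‖·‖²`.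
-/

open Set

/-- A function `u` is locally delta-convex (DC) on an open set `U` if on every open convex
set compactly contained in `U` it is a difference of two convex functions. -/
def LocallyDC {E : Type*} [NormedAddCommGroup E] [NormedSpace ℝ E]
    (U : Set E) (u : E → ℝ) : Prop :=
  ∀ Ω' : Set E, IsOpen Ω' → Convex ℝ Ω' → IsCompact (closure Ω') → closure Ω' ⊆ U →
    ∃ g₁ g₂ : E → ℝ, ConvexOn ℝ Ω' g₁ ∧ ConvexOn ℝ Ω' g₂ ∧ ∀ x ∈ Ω', u x = g₁ x - g₂ x

open AffineMap

theorem Convex.convexOn_of_hasFDerivAt_of_monotone {E : Type*} [NormedAddCommGroup E]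
    [NormedSpace ℝ E] {s : Set E} (hs : Convex ℝ s) {g : E → ℝ} {g' : E → E →L[ℝ] ℝ}
    (hg : ∀ x ∈ s, HasFDerivAt g (g' x) x)
    (hmono : ∀ x ∈ s, ∀ y ∈ s, 0 ≤ (g' y - g' x) (y - x)) : ConvexOn ℝ s g := by
  refine ⟨hs, fun x hx y hy a b ha hb hab => ?_⟩
  -- Restricted to the segment `[x, y]`, `g` has a monotone derivative.
  have hmem : ∀ t ∈ Icc (0 : ℝ) 1, lineMap x y t ∈ s := fun t ht => hs.lineMap_mem hx hy ht
  have hderiv : ∀ t ∈ Icc (0 : ℝ) 1,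
      HasDerivAt (g ∘ lineMap x y) (g' (lineMap x y t) (y - x)) t := fun t ht =>
    (hg _ (hmem t ht)).comp_hasDerivAt t hasDerivAt_lineMap
  have hsegment : ConvexOn ℝ (Icc (0 : ℝ) 1) (g ∘ lineMap x y) := by
    refine MonotoneOn.convexOn_of_deriv (convex_Icc 0 1)
      (fun t ht => (hderiv t ht).continuousAt.continuousWithinAt)
      (fun t ht => (hderiv t (interior_subset ht)).differentiableAt.differentiableWithinAt)
      fun t ht u hu htu => ?_
    rw [interior_Icc] at ht hu
    rw [(hderiv t (Ioo_subset_Icc_self ht)).deriv, (hderiv u (Ioo_subset_Icc_self hu)).deriv]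
    rcases htu.eq_or_lt with rfl | htu
    · rfl
    have hsub : lineMap x y u - lineMap x y t = (u - t) • (y - x) := by
      simp only [lineMap_apply_module']
      module
    have h := hmono _ (hmem t (Ioo_subset_Icc_self ht)) _ (hmem u (Ioo_subset_Icc_self hu))
    rw [hsub, map_smul, smul_eq_mul, sub_apply] at h
    exact sub_nonneg.1 (nonneg_of_mul_nonneg_right h (sub_pos.2 htu))
  obtain rfl : a = 1 - b := by linarith
  have hineq := hsegment.2 (left_mem_Icc.2 zero_le_one) (right_mem_Icc.2 zero_le_one) ha hb hab
  simpa [lineMap_apply_module] using hineq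

section InnerProductSpace

variable {F : Type*} [NormedAddCommGroup F] [InnerProductSpace ℝ F] {s : Set F}

theorem convexOn_const_mul_norm_sq (hs : Convex ℝ s) {c : ℝ} (hc : 0 ≤ c) :
    ConvexOn ℝ s fun x => c * ‖x‖ ^ 2 :=
  ((convexOn_norm hs).pow (fun x _ => norm_nonneg x) 2).smul hc

theorem LipschitzOnWith.convexOn_add_half_mul_norm_sq (hs : Convex ℝ s) {f : F → ℝ}
    {f' : F → F →L[ℝ] ℝ} (hf : ∀ x ∈ s, HasFDerivAt f (f' x) x) {K : NNReal}
    (hK : LipschitzOnWith K f' s) : ConvexOn ℝ s fun x => f x + K / 2 * ‖x‖ ^ 2 := by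
  refine hs.convexOn_of_hasFDerivAt_of_monotone (g' := fun x => f' x + (K : ℝ) • innerSL ℝ x)
    (fun x hx => ?_) fun x hx y hy => ?_
  · have hsq : HasFDerivAt (fun x => (K : ℝ) / 2 * ‖x‖ ^ 2) ((K : ℝ) • innerSL ℝ x) x := by
      have := (hasStrictFDerivAt_norm_sq x).hasFDerivAt.const_smul ((K : ℝ) / 2)
      rwa [smul_comm, ← smul_assoc, nsmul_eq_mul, Nat.cast_ofNat,
        mul_div_cancel₀ _ two_ne_zero] at this
    exact (hf x hx).add hsq
  · have hbound : ‖(f' y - f' x) (y - x)‖ ≤ K * ‖y - x‖ ^ 2 :=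
      calc ‖(f' y - f' x) (y - x)‖ ≤ ‖f' y - f' x‖ * ‖y - x‖ := ContinuousLinearMap.le_opNorm _ _
        _ ≤ K * ‖y - x‖ * ‖y - x‖ := by gcongr; exact hK.norm_sub_le hy hx
        _ = K * ‖y - x‖ ^ 2 := by ring
    have hquad : ((K : ℝ) • innerSL ℝ y - (K : ℝ) • innerSL ℝ x) (y - x) = K * ‖y - x‖ ^ 2 := by
      rw [← smul_sub, smul_apply, sub_apply, innerSL_apply_apply, innerSL_apply_apply,
        ← inner_sub_left, real_inner_self_eq_norm_sq, smul_eq_mul]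
    rw [add_sub_add_comm, add_apply, hquad]
    linarith [neg_le_of_abs_le (Real.norm_eq_abs _ ▸ hbound)]

end InnerProductSpace

theorem stmt_1_general {m : ℕ} (U : Set (EuclideanSpace ℝ (Fin m)))
    (f : EuclideanSpace ℝ (Fin m) → ℝ)
    (f' : EuclideanSpace ℝ (Fin m) → (EuclideanSpace ℝ (Fin m) →L[ℝ] ℝ))
    (hderiv : ∀ x ∈ U, HasFDerivAt f (f' x) x)
    (hlip : ∀ x ∈ U, ∃ (L : NNReal) (t : Set (EuclideanSpace ℝ (Fin m))),
      t ∈ nhdsWithin x U ∧ LipschitzOnWith L f' t) :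
    LocallyDC U f := by
  intro Ω _ hΩ hcompact hsub
  have hlocal : LocallyLipschitzOn (closure Ω) f' := LocallyLipschitzOn.mono hlip hsub
  obtain ⟨K, hK⟩ := hlocal.exists_lipschitzOnWith_of_compact hcompact
  refine ⟨fun x => f x + K / 2 * ‖x‖ ^ 2, fun x => K / 2 * ‖x‖ ^ 2,
    (hK.mono subset_closure).convexOn_add_half_mul_norm_sq hΩ
      fun x hx => hderiv x (hsub (subset_closure hx)),
    convexOn_const_mul_norm_sq hΩ (by positivity), fun x _ => by ring⟩

/-- If `f : U → ℝ` has a locally Lipschitz derivative on the open set `U` (in particular if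
`f` is smooth), then `f` is locally delta-convex on `U`. -/
theorem stmt_1 {m : ℕ} (U : Set (EuclideanSpace ℝ (Fin m))) (hU : IsOpen U)
    (f : EuclideanSpace ℝ (Fin m) → ℝ)
    (f' : EuclideanSpace ℝ (Fin m) → (EuclideanSpace ℝ (Fin m) →L[ℝ] ℝ))
    (hderiv : ∀ x ∈ U, HasFDerivAt f (f' x) x)
    (hlip : ∀ x ∈ U, ∃ (L : NNReal) (t : Set (EuclideanSpace ℝ (Fin m))),
      t ∈ nhdsWithin x U ∧ LipschitzOnWith L f' t) :
    LocallyDC U f :=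
  stmt_1_general U f f' hderiv hlip
end

section
/- Let N ⊆ ℝ^m be a nonempty closed set and p ∈ ℝ^m \ N a point with exactly two nearest points q₁, q₂ ∈ π_N(p). Set N_j := N ∩ { y : |q_j - y| ≤ (1/4)|q₁ - q₂| } for j = 1, 2. Then N₁ and N₂ are disjoint nonempty compact sets, and there exists r > 0 such that for every x in the open ball B_r(p) one has π_N(x) ⊆ N₁ ∪ N₂ and d_N(x) = min(d_{N₁}(x), d_{N₂}(x)). -/
/-!
Points of `N` that are almost nearest to `p` lie close to the nearest points of `p`: outside any
open `U ⊇ π_N(p)` the distance to `p`, restricted to the compact set `N ∩ B̄(p, d_N(p) + 1)`, stays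
above `d_N(p)` by a uniform margin. Hence `π_N` is upper semicontinuous, and for `x` near `p` every
nearest point lies within `|q₁ - q₂|/4` of `q₁` or `q₂`. Since `N₁ ∪ N₂ ⊆ N` then contains a
nearest point of `x`, `d_N(x) = d_{N₁ ∪ N₂}(x) = min (d_{N₁}(x)) (d_{N₂}(x))`.
-/

open Set Metric

/-- The set of nearest points of `N` to `x`. -/
def nearestPts {E : Type*} [MetricSpace E] (N : Set E) (x : E) : Set E :=
  {q ∈ N | dist q x = infDist x N}

open Filter Topology

theorem Metric.setOf_dist_le_eq_closedBall {E : Type*} [PseudoMetricSpace E] (q : E) (r : ℝ) :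
    {y | dist q y ≤ r} = closedBall q r := by
  ext y
  exact mem_closedBall'.symm

theorem Metric.infDist_union {E : Type*} [PseudoMetricSpace E] {s t : Set E}
    (hs : s.Nonempty) (ht : t.Nonempty) (x : E) :
    infDist x (s ∪ t) = min (infDist x s) (infDist x t) := by
  simp only [infDist, infEDist_union]
  exact ENNReal.toReal_min (infEDist_ne_top hs) (infEDist_ne_top ht)

section NearestPoints

variable {E : Type*} [MetricSpace E] {N A U : Set E} {x p q : E}

theorem nearestPts_subset : nearestPts N x ⊆ N := fun _ hq => hq.1

theorem nearestPts_nonempty [ProperSpace E] (hN : IsClosed N) (hne : N.Nonempty) (x : E) :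
    (nearestPts N x).Nonempty := by
  obtain ⟨q, hqN, hq⟩ := hN.exists_infDist_eq_dist hne x
  exact ⟨q, hqN, by rw [dist_comm, hq]⟩

theorem infDist_eq_of_mem_nearestPts (hAN : A ⊆ N) (hqA : q ∈ A) (hq : q ∈ nearestPts N x) :
    infDist x A = infDist x N :=
  le_antisymm ((infDist_le_dist_of_mem hqA).trans_eq (by rw [dist_comm, hq.2]))
    (infDist_le_infDist_of_subset hAN ⟨q, hqA⟩)

theorem exists_forall_dist_lt_infDist_add_mem [ProperSpace E] (hN : IsClosed N) (hU : IsOpen U)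
    (hpU : nearestPts N p ⊆ U) :
    ∃ δ > 0, ∀ q ∈ N, dist q p < infDist p N + δ → q ∈ U := by
  set K := (N ∩ closedBall p (infDist p N + 1)) \ U
  have hK : IsCompact K := ((isCompact_closedBall _ _).inter_left hN).diff hU
  have hK_far : ∀ q ∈ K, infDist p N < dist q p := by
    rintro q ⟨⟨hqN, -⟩, hqU⟩
    refine lt_of_le_of_ne ?_ fun h => hqU (hpU ⟨hqN, h.symm⟩)
    exact dist_comm p q ▸ infDist_le_dist_of_mem hqN
  obtain ⟨b, hb, hbK⟩ :=
    hK.exists_forall_le' (continuous_id'.dist continuous_const).continuousOn hK_far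
  refine ⟨min 1 (b - infDist p N), lt_min one_pos (sub_pos.2 hb), fun q hqN hq => ?_⟩
  by_contra hqU
  have hqK : q ∈ K :=
    ⟨⟨hqN, mem_closedBall.2 (by linarith [min_le_left 1 (b - infDist p N)])⟩, hqU⟩
  linarith [hbK q hqK, min_le_right 1 (b - infDist p N)]

/-- Upper semicontinuity of the metric projection. -/
theorem eventually_nearestPts_subset [ProperSpace E] (hN : IsClosed N) (hU : IsOpen U)
    (hpU : nearestPts N p ⊆ U) : ∀ᶠ x in 𝓝 p, nearestPts N x ⊆ U := by
  obtain ⟨δ, hδ, hδU⟩ := exists_forall_dist_lt_infDist_add_mem hN hU hpU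
  refine eventually_nhds_iff_ball.2 ⟨δ / 2, half_pos hδ, fun x hx q hq => hδU q hq.1 ?_⟩
  rw [mem_ball] at hx
  calc dist q p ≤ dist q x + dist x p := dist_triangle q x p
    _ ≤ infDist p N + dist x p + dist x p := by
      rw [hq.2]; gcongr; exact infDist_le_infDist_add_dist
    _ < infDist p N + δ := by linarith

end NearestPoints

theorem stmt_5_general {m : ℕ} (N : Set (EuclideanSpace ℝ (Fin m)))
    (hN : IsClosed N)
    (p q₁ q₂ : EuclideanSpace ℝ (Fin m)) (hq12 : q₁ ≠ q₂)
    (hproj : nearestPts N p = {q₁, q₂})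
    (N₁ N₂ : Set (EuclideanSpace ℝ (Fin m)))
    (hN₁ : N₁ = N ∩ {y | dist q₁ y ≤ (1/4) * dist q₁ q₂})
    (hN₂ : N₂ = N ∩ {y | dist q₂ y ≤ (1/4) * dist q₁ q₂}) :
    Disjoint N₁ N₂ ∧ N₁.Nonempty ∧ N₂.Nonempty ∧ IsCompact N₁ ∧ IsCompact N₂ ∧
    ∃ r > (0 : ℝ), ∀ x ∈ ball p r,
      nearestPts N x ⊆ N₁ ∪ N₂ ∧
      infDist x N = min (infDist x N₁) (infDist x N₂) := by
  rw [setOf_dist_le_eq_closedBall] at hN₁ hN₂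
  subst hN₁ hN₂
  set ε := 1 / 4 * dist q₁ q₂ with hε_def
  have hd : 0 < dist q₁ q₂ := dist_pos.2 hq12
  have hε : 0 < ε := by positivity
  have hq₁ : q₁ ∈ N ∩ closedBall q₁ ε :=
    ⟨nearestPts_subset (hproj ▸ mem_insert q₁ {q₂}), mem_closedBall_self hε.le⟩
  have hq₂ : q₂ ∈ N ∩ closedBall q₂ ε :=
    ⟨nearestPts_subset (hproj ▸ mem_insert_of_mem q₁ (mem_singleton q₂)), mem_closedBall_self hε.le⟩
  have hsplit : nearestPts N p ⊆ ball q₁ ε ∪ ball q₂ ε := by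
    rw [hproj]
    exact insert_subset (.inl (mem_ball_self hε)) (singleton_subset_iff.2 (.inr (mem_ball_self hε)))
  obtain ⟨r, hr, hball⟩ := eventually_nhds_iff_ball.1 <|
    eventually_nearestPts_subset hN (isOpen_ball.union isOpen_ball) hsplit
  have hsub : ∀ x ∈ ball p r, nearestPts N x ⊆ N ∩ closedBall q₁ ε ∪ N ∩ closedBall q₂ ε :=
    fun x hx q hq => (hball x hx hq).imp (fun h => ⟨hq.1, ball_subset_closedBall h⟩)
      (fun h => ⟨hq.1, ball_subset_closedBall h⟩)
  refine ⟨(closedBall_disjoint_closedBall (by linarith)).mono inter_subset_right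
      inter_subset_right, ⟨q₁, hq₁⟩, ⟨q₂, hq₂⟩, (isCompact_closedBall _ _).inter_left hN,
    (isCompact_closedBall _ _).inter_left hN, r, hr, fun x hx => ⟨hsub x hx, ?_⟩⟩
  obtain ⟨q, hq⟩ := nearestPts_nonempty hN ⟨q₁, hq₁.1⟩ x
  rw [← infDist_union ⟨q₁, hq₁⟩ ⟨q₂, hq₂⟩]
  exact (infDist_eq_of_mem_nearestPts (union_subset inter_subset_left inter_subset_left)
    (hsub x hx hq) hq).symm

/-- Cleaving lemma setup: if `p ∉ N` has exactly two nearest points `q₁ ≠ q₂` and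
`N_j := N ∩ {y : dist(q_j, y) ≤ (1/4)·dist(q₁,q₂)}`, then `N₁, N₂` are disjoint nonempty
compact sets and there is `r > 0` such that for every `x ∈ B_r(p)`, `π_N(x) ⊆ N₁ ∪ N₂`
and `d_N(x) = min (d_{N₁}(x)) (d_{N₂}(x))`. -/
theorem stmt_5 {m : ℕ} (N : Set (EuclideanSpace ℝ (Fin m)))
    (hN : IsClosed N) (hNne : N.Nonempty)
    (p q₁ q₂ : EuclideanSpace ℝ (Fin m)) (hp : p ∉ N) (hq12 : q₁ ≠ q₂)
    (hproj : nearestPts N p = {q₁, q₂})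
    (N₁ N₂ : Set (EuclideanSpace ℝ (Fin m)))
    (hN₁ : N₁ = N ∩ {y | dist q₁ y ≤ (1/4) * dist q₁ q₂})
    (hN₂ : N₂ = N ∩ {y | dist q₂ y ≤ (1/4) * dist q₁ q₂}) :
    Disjoint N₁ N₂ ∧ N₁.Nonempty ∧ N₂.Nonempty ∧ IsCompact N₁ ∧ IsCompact N₂ ∧
    ∃ r > (0 : ℝ), ∀ x ∈ ball p r,
      nearestPts N x ⊆ N₁ ∪ N₂ ∧
      infDist x N = min (infDist x N₁) (infDist x N₂) :=
  stmt_5_general N hN p q₁ q₂ hq12 hproj N₁ N₂ hN₁ hN₂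
end

section
/- Let N ⊆ ℝ^m be a nonempty closed set and x ∈ ℝ^m \ N a point admitting at least two distinct nearest points in N. Then d_N is not differentiable at x. -/
open Set Metric

open Topology

/-!
Moving from `x` towards a nearest point `q` of `N` decreases `d_N` at unit rate, so a derivative
`L` of `d_N` at `x` satisfies `L (x - q) = ‖x - q‖ = d_N x`. Since `d_N` is `1`-Lipschitz, `‖L‖ ≤ 1`,
and in a strictly convex space a functional of norm at most one attains its norm at a single point
of each sphere; hence there is only one nearest point.
-/

section InfDist

variable {E : Type*} [NormedAddCommGroup E] [NormedSpace ℝ E] {s : Set E} {x q : E}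

theorem infDist_lineMap_of_dist_eq_infDist (hq : q ∈ s) (hqx : dist q x = infDist x s)
    {t : ℝ} (ht : t ∈ Icc (0 : ℝ) 1) :
    infDist (AffineMap.lineMap x q t) s = (1 - t) * infDist x s := by
  have hdist_x : dist (AffineMap.lineMap x q t) x = t * infDist x s := by
    rw [dist_lineMap_left, Real.norm_of_nonneg ht.1, dist_comm, hqx]
  have hdist_q : dist (AffineMap.lineMap x q t) q = (1 - t) * infDist x s := by
    rw [dist_lineMap_right, Real.norm_of_nonneg (sub_nonneg.2 ht.2), dist_comm, hqx]
  have hle := infDist_le_dist_of_mem (x := AffineMap.lineMap x q t) hq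
  have hge := infDist_le_infDist_add_dist (x := x) (y := AffineMap.lineMap x q t) (s := s)
  rw [dist_comm] at hge
  linarith

theorem HasFDerivAt.infDist_apply_sub_eq_norm {L : E →L[ℝ] ℝ}
    (hL : HasFDerivAt (infDist · s) L x) (hq : q ∈ s) (hqx : dist q x = infDist x s) :
    L (x - q) = ‖x - q‖ := by
  have hderiv : HasDerivWithinAt (fun t : ℝ => infDist (AffineMap.lineMap x q t) s)
      (L (q - x)) (Ici 0) 0 := by
    have hL₀ : HasFDerivAt (infDist · s) L (AffineMap.lineMap x q (0 : ℝ)) := by simpa using hL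
    exact (hL₀.comp_hasDerivAt 0 AffineMap.hasDerivAt_lineMap).hasDerivWithinAt
  have hsegment : (fun t : ℝ => infDist (AffineMap.lineMap x q t) s)
      =ᶠ[𝓝[≥] 0] fun t => (1 - t) * infDist x s := by
    filter_upwards [Icc_mem_nhdsGE zero_lt_one] with t ht
    exact infDist_lineMap_of_dist_eq_infDist hq hqx ht
  have haffine : HasDerivWithinAt (fun t : ℝ => (1 - t) * infDist x s)
      (-infDist x s) (Ici 0) 0 := by
    simpa using (((hasDerivAt_id (0 : ℝ)).const_sub 1).mul_const (infDist x s)).hasDerivWithinAt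
  have hunique : L (q - x) = -infDist x s :=
    (uniqueDiffOn_Ici 0 0 self_mem_Ici).eq_deriv _ hderiv
      (haffine.congr_of_eventuallyEq hsegment (by simp))
  rw [← neg_sub q x, map_neg, hunique, neg_neg, norm_neg, ← dist_eq_norm, hqx]

end InfDist

theorem ContinuousLinearMap.eq_of_apply_eq_norm {E : Type*} [NormedAddCommGroup E]
    [NormedSpace ℝ E] [StrictConvexSpace ℝ E] {L : E →L[ℝ] ℝ} (hL : ‖L‖ ≤ 1) {u v : E}
    (huv : ‖u‖ = ‖v‖) (hu : L u = ‖u‖) (hv : L v = ‖v‖) : u = v := by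
  refine eq_of_norm_eq_of_norm_add_eq huv (le_antisymm (norm_add_le u v) ?_)
  calc ‖u‖ + ‖v‖ = L (u + v) := by rw [map_add, hu, hv]
    _ ≤ ‖L (u + v)‖ := Real.le_norm_self _
    _ ≤ ‖L‖ * ‖u + v‖ := L.le_opNorm _
    _ ≤ ‖u + v‖ := mul_le_of_le_one_left (norm_nonneg _) hL

theorem stmt_7_general {m : ℕ} (N : Set (EuclideanSpace ℝ (Fin m)))
    (x q₁ q₂ : EuclideanSpace ℝ (Fin m)) (hq12 : q₁ ≠ q₂)
    (hq₁ : q₁ ∈ N) (hq₂ : q₂ ∈ N)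
    (hd₁ : dist q₁ x = infDist x N) (hd₂ : dist q₂ x = infDist x N) :
    ¬ DifferentiableAt ℝ (fun y => infDist y N) x := by
  intro hdiff
  have hL := hdiff.hasFDerivAt
  have hnorm : ‖fderiv ℝ (fun y => infDist y N) x‖ ≤ 1 := by
    simpa using hL.le_of_lipschitz (lipschitz_infDist_pt N)
  have hsphere : ‖x - q₁‖ = ‖x - q₂‖ := by rw [← dist_eq_norm', ← dist_eq_norm', hd₁, hd₂]
  exact hq12 <| sub_right_injective <| ContinuousLinearMap.eq_of_apply_eq_norm hnorm hsphere
    (hL.infDist_apply_sub_eq_norm hq₁ hd₁) (hL.infDist_apply_sub_eq_norm hq₂ hd₂)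

/-- If `x ∉ N` admits two distinct nearest points in the nonempty closed set `N`, then the
distance function `d_N` is not differentiable at `x`. -/
theorem stmt_7 {m : ℕ} (N : Set (EuclideanSpace ℝ (Fin m)))
    (hN : IsClosed N) (hNne : N.Nonempty)
    (x q₁ q₂ : EuclideanSpace ℝ (Fin m)) (hx : x ∉ N) (hq12 : q₁ ≠ q₂)
    (hq₁ : q₁ ∈ N) (hq₂ : q₂ ∈ N)
    (hd₁ : dist q₁ x = infDist x N) (hd₂ : dist q₂ x = infDist x N) :
    ¬ DifferentiableAt ℝ (fun y => infDist y N) x :=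
  stmt_7_general N x q₁ q₂ hq12 hq₁ hq₂ hd₁ hd₂
end

section
/- Let N ⊆ ℝ^m be a nonempty closed set and x ∈ ℝ^m \ N. If q ∈ N is the unique nearest point of N to x, and moreover q remains the unique limit of nearest points along sequences converging to x (equivalently, π_N is single-valued and continuous at x via upper semicontinuity), then d_N is differentiable at x with gradient (x - q)/|x - q|. -/
open Set Metric Filter

open Topology RealInnerProductSpace

/-
Write `d = infDist · N`. Comparing with the nearest point `q` of `x` gives
`d y - d x ≤ ‖y - q‖ - ‖x - q‖ ≤ ⟪(y - q)/‖y - q‖, y - x⟫`, and comparing with a nearest point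
`p y` of `y` gives `⟪(x - p y)/‖x - p y‖, y - x⟫ ≤ d y - d x`: both are the supporting-hyperplane
inequality of the norm. The two slopes tend to `(x - q)/‖x - q‖` as `y → x`, the second one
because nearest points converge to `q`, so `d` is squeezed to first order.
-/

theorem tendsto_nhds_of_seq_tendsto_of_mem {X Y : Type*} [TopologicalSpace X]
    [FrechetUrysohnSpace X] [TopologicalSpace Y] {f : X → Y} {x : X} {y : Y} {s : Set X}
    (hs : s ∈ 𝓝 x)
    (h : ∀ u : ℕ → X, (∀ j, u j ∈ s) → Tendsto u atTop (𝓝 x) → Tendsto (f ∘ u) atTop (𝓝 y)) :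
    Tendsto f (𝓝 x) (𝓝 y) := by
  refine tendsto_nhds_iff_seq_tendsto.2 fun u hu => ?_
  obtain ⟨n, hn⟩ := eventually_atTop.1 (hu.eventually hs)
  rw [← tendsto_add_atTop_iff_nat n]
  exact h (fun j => u (j + n)) (fun j => hn _ (Nat.le_add_left n j))
    ((tendsto_add_atTop_iff_nat n).2 hu)

section InnerProductSpace

variable {E : Type*} [NormedAddCommGroup E] [InnerProductSpace ℝ E]

theorem norm_sub_norm_le_inner (u w : E) : ‖u‖ - ‖w‖ ≤ ⟪‖u‖⁻¹ • u, u - w⟫ := by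
  rcases eq_or_ne u 0 with rfl | hu
  · simp
  have hu' : 0 < ‖u‖ := norm_pos_iff.2 hu
  have hself : ⟪‖u‖⁻¹ • u, u⟫ = ‖u‖ := by
    rw [real_inner_smul_left, real_inner_self_eq_norm_sq]
    field_simp
  have hw : ⟪‖u‖⁻¹ • u, w⟫ ≤ ‖w‖ := by
    calc ⟪‖u‖⁻¹ • u, w⟫ ≤ ‖‖u‖⁻¹ • u‖ * ‖w‖ := real_inner_le_norm _ _
      _ = ‖w‖ := by rw [norm_smul, norm_inv, norm_norm, inv_mul_cancel₀ hu'.ne', one_mul]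
  rw [inner_sub_right, hself]
  linarith

theorem infDist_sub_infDist_le_inner {s : Set E} {x q : E} (hq : q ∈ s)
    (hqx : dist q x = infDist x s) (y : E) :
    infDist y s - infDist x s ≤ ⟪‖y - q‖⁻¹ • (y - q), y - x⟫ := by
  have hy : infDist y s ≤ ‖y - q‖ := dist_eq_norm y q ▸ infDist_le_dist_of_mem hq
  have hx : infDist x s = ‖x - q‖ := by rw [← hqx, dist_eq_norm']
  have := norm_sub_norm_le_inner (y - q) (x - q)
  rw [sub_sub_sub_cancel_right] at this
  linarith

variable [CompleteSpace E]

theorem hasGradientAt_of_inner_le_sub_le_inner {f : E → ℝ} {x v : E} {a b : E → E}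
    (ha : Tendsto a (𝓝 x) (𝓝 v)) (hb : Tendsto b (𝓝 x) (𝓝 v))
    (hlow : ∀ᶠ y in 𝓝 x, ⟪a y, y - x⟫ ≤ f y - f x)
    (hup : ∀ᶠ y in 𝓝 x, f y - f x ≤ ⟪b y, y - x⟫) :
    HasGradientAt f v x := by
  rw [hasGradientAt_iff_isLittleO, Asymptotics.isLittleO_iff]
  intro c hc
  filter_upwards [ha.eventually (closedBall_mem_nhds v hc),
    hb.eventually (closedBall_mem_nhds v hc), hlow, hup] with y hay hby hly huy
  rw [dist_eq_norm] at hay hby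
  have hbv : ⟪b y - v, y - x⟫ ≤ c * ‖y - x‖ :=
    (real_inner_le_norm _ _).trans (mul_le_mul_of_nonneg_right hby (norm_nonneg _))
  have hav : -(c * ‖y - x‖) ≤ ⟪a y - v, y - x⟫ :=
    neg_le_of_abs_le <| (abs_real_inner_le_norm _ _).trans
      (mul_le_mul_of_nonneg_right hay (norm_nonneg _))
  rw [inner_sub_left] at hbv hav
  rw [Real.norm_eq_abs, abs_le]
  constructor <;> linarith

end InnerProductSpace

theorem stmt_8_general {m : ℕ} (N : Set (EuclideanSpace ℝ (Fin m)))
    (hN : IsClosed N)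
    (x q : EuclideanSpace ℝ (Fin m)) (hx : x ∉ N)
    (hqN : q ∈ N) (hqd : dist q x = infDist x N)
    (hcont : ∀ (xs qs : ℕ → EuclideanSpace ℝ (Fin m)),
      Tendsto xs atTop (nhds x) → (∀ j, xs j ∉ N) →
      (∀ j, qs j ∈ N ∧ dist (qs j) (xs j) = infDist (xs j) N) →
      Tendsto qs atTop (nhds q)) :
    HasGradientAt (fun y => infDist y N) (‖x - q‖⁻¹ • (x - q)) x := by
  have hnearest : ∀ y, ∃ z ∈ N, dist z y = infDist y N := fun y => by
    obtain ⟨z, hz, hd⟩ := hN.exists_infDist_eq_dist ⟨q, hqN⟩ y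
    exact ⟨z, hz, by rw [hd, dist_comm]⟩
  choose p hpN hpd using hnearest
  have hp : Tendsto p (𝓝 x) (𝓝 q) :=
    tendsto_nhds_of_seq_tendsto_of_mem (hN.isOpen_compl.mem_nhds hx) fun u huN hu =>
      hcont u (p ∘ u) hu huN fun j => ⟨hpN _, hpd _⟩
  have hxq : x - q ≠ 0 := sub_ne_zero.2 (ne_of_mem_of_not_mem hqN hx).symm
  have hnormalize : ContinuousAt (fun z : EuclideanSpace ℝ (Fin m) => ‖z‖⁻¹ • z) (x - q) :=
    (continuous_norm.continuousAt.inv₀ (norm_ne_zero_iff.2 hxq)).smul continuousAt_id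
  refine hasGradientAt_of_inner_le_sub_le_inner
    (hnormalize.tendsto.comp (tendsto_const_nhds.sub hp))
    (hnormalize.tendsto.comp ((continuous_id.sub continuous_const).tendsto x))
    (Eventually.of_forall fun y => ?_)
    (Eventually.of_forall (infDist_sub_infDist_le_inner hqN hqd))
  have hlow := infDist_sub_infDist_le_inner (hpN y) (hpd y) x
  rw [← neg_sub y x, inner_neg_right] at hlow
  dsimp only [Function.comp_apply]
  linarith

/-- If `q` is the unique nearest point of the nonempty closed set `N` to `x ∉ N`, and `q`
remains the unique limit of nearest points along sequences converging to `x`, then `d_N` is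
differentiable at `x` with gradient `(x - q)/‖x - q‖`. -/
theorem stmt_8 {m : ℕ} (N : Set (EuclideanSpace ℝ (Fin m)))
    (hN : IsClosed N) (hNne : N.Nonempty)
    (x q : EuclideanSpace ℝ (Fin m)) (hx : x ∉ N)
    (hqN : q ∈ N) (hqd : dist q x = infDist x N)
    (huniq : ∀ q' ∈ N, dist q' x = infDist x N → q' = q)
    (hcont : ∀ (xs qs : ℕ → EuclideanSpace ℝ (Fin m)),
      Tendsto xs atTop (nhds x) → (∀ j, xs j ∉ N) →
      (∀ j, qs j ∈ N ∧ dist (qs j) (xs j) = infDist (xs j) N) →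
      Tendsto qs atTop (nhds q)) :
    HasGradientAt (fun y => infDist y N) (‖x - q‖⁻¹ • (x - q)) x :=
  stmt_8_general N hN x q hx hqN hqd hcont
end

section
/- Let {K_j}_{j ≥ 1} be a sequence of segments in ℝ² whose union K is compact, and let u := Σ_{j=1}^∞ 2^{-j} d(K_j, ·). Then u is not differentiable at any point of K; consequently the singular set of u equals exactly K. -/
/-!
At a point `x ∉ K` every `d(K_j, ·)` is differentiable, since the distance to a closed convex set
is squeezed between the distance to the nearest point `p` and the linear function cutting out the
supporting half-space at `p`, and these two touch at `x`. The distance functions are `1`-Lipschitz,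
so the series of derivatives converges uniformly near `x` and `u` is differentiable there.

At `x ∈ K_j`, move along a unit vector `v` orthogonal to `K_j`. Each `d(K_n, ·)` is convex, so its
second difference at `x` along `v` is nonnegative, while `d(K_j, x ± t v) = |t|`. Hence
`u (x + t v) + u (x - t v) - 2 u x ≥ 2^{-j} · 2 |t|`, which rules out differentiability at `x`.
-/

open Set Metric Filter Asymptotics

theorem not_differentiableAt_of_mul_abs_le {f : ℝ → ℝ} {c : ℝ} (hc : 0 < c)
    (h : ∀ t, c * |t| ≤ f t + f (-t) - 2 * f 0) : ¬ DifferentiableAt ℝ f 0 := by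
  intro hf
  have hsymm : HasDerivAt (fun t => f t + f (-t)) 0 0 := by
    have hf' : HasDerivAt f (deriv f 0) (-0) := by rw [neg_zero]; exact hf.hasDerivAt
    exact (hf.hasDerivAt.fun_add (hf'.comp 0 (hasDerivAt_neg' 0))).congr_deriv (by ring)
  have hslope : c ≤ 0 := by
    refine ge_of_tendsto hsymm.tendsto_slope_zero_right ?_
    filter_upwards [self_mem_nhdsWithin] with t (ht : 0 < t)
    rw [smul_eq_mul, le_inv_mul_iff₀ ht, zero_add, neg_zero]
    have := h t
    rw [abs_of_pos ht] at this
    linarith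
  linarith

section NormedSpace

variable {E : Type*} [NormedAddCommGroup E] [NormedSpace ℝ E]

theorem convexOn_infDist {C : Set E} (hC : Convex ℝ C) : ConvexOn ℝ univ (infDist · C) := by
  refine ⟨convex_univ, fun y _ z _ a b ha hb hab => ?_⟩
  rcases C.eq_empty_or_nonempty with rfl | hne
  · simp
  refine le_of_forall_pos_le_add fun ε hε => ?_
  obtain ⟨y', hy', hyy'⟩ := (infDist_lt_iff hne).1 (lt_add_of_pos_right (infDist y C) hε)
  obtain ⟨z', hz', hzz'⟩ := (infDist_lt_iff hne).1 (lt_add_of_pos_right (infDist z C) hε)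
  calc infDist (a • y + b • z) C ≤ dist (a • y + b • z) (a • y' + b • z') :=
        infDist_le_dist_of_mem (hC hy' hz' ha hb hab)
    _ ≤ a * dist y y' + b * dist z z' := by
        refine (dist_add_add_le _ _ _ _).trans ?_
        rw [dist_smul₀, dist_smul₀, Real.norm_of_nonneg ha, Real.norm_of_nonneg hb]
    _ ≤ a * (infDist y C + ε) + b * (infDist z C + ε) := by gcongr
    _ = a • infDist y C + b • infDist z C + ε := by
        rw [smul_eq_mul, smul_eq_mul]; linear_combination ε * hab

theorem isCompact_segment (p q : E) : IsCompact (segment ℝ p q) :=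
  convexHull_pair (𝕜 := ℝ) p q ▸ Set.Finite.isCompact_convexHull (𝕜 := ℝ) (toFinite {p, q})

theorem HasFDerivAt.of_le_of_le {f g φ : E → ℝ} {L : E →L[ℝ] ℝ} {x : E}
    (hf : HasFDerivAt f L x) (hg : HasFDerivAt g L x) (hgφ : ∀ y, g y ≤ φ y)
    (hφf : ∀ y, φ y ≤ f y) (hfg : f x = g x) : HasFDerivAt φ L x := by
  have hφx : φ x = f x := le_antisymm (hφf x) (hfg ▸ hgφ x)
  refine .of_isLittleO <| (isBigO_of_le _ fun y => ?_).trans_isLittleO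
    (hf.isLittleO.norm_left.add hg.isLittleO.norm_left)
  have hlow : g y - g x - L (y - x) ≤ φ y - φ x - L (y - x) := by linarith [hgφ y]
  have hup : φ y - φ x - L (y - x) ≤ f y - f x - L (y - x) := by linarith [hφf y]
  rw [Real.norm_of_nonneg (add_nonneg (norm_nonneg _) (norm_nonneg _)), Real.norm_eq_abs,
    abs_le, Real.norm_eq_abs, Real.norm_eq_abs]
  constructor <;> linarith [neg_abs_le (g y - g x - L (y - x)),
    le_abs_self (f y - f x - L (y - x)), abs_nonneg (f y - f x - L (y - x)),
    abs_nonneg (g y - g x - L (y - x))]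

theorem DifferentiableAt.of_le_of_le {f g φ : E → ℝ} {x : E}
    (hf : DifferentiableAt ℝ f x) (hg : DifferentiableAt ℝ g x) (hgφ : ∀ y, g y ≤ φ y)
    (hφf : ∀ y, φ y ≤ f y) (hfg : f x = g x) : DifferentiableAt ℝ φ x := by
  have hmin : IsLocalMin (f - g) x :=
    Eventually.of_forall fun y => by simpa [hfg] using (hgφ y).trans (hφf y)
  have hL : fderiv ℝ f x = fderiv ℝ g x :=
    sub_eq_zero.1 (hmin.hasFDerivAt_eq_zero (hf.hasFDerivAt.sub hg.hasFDerivAt))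
  exact (HasFDerivAt.of_le_of_le (hL ▸ hf.hasFDerivAt) hg.hasFDerivAt hgφ hφf
    hfg).differentiableAt

end NormedSpace

theorem summable_mul_infDist {X : Type*} [PseudoMetricSpace X] {K : ℕ → Set X} {a : ℕ → ℝ}
    (ha : Summable a) (hK : Bornology.IsBounded (⋃ n, K n)) (y : X) :
    Summable fun n => a n * infDist y (K n) := by
  obtain ⟨R, hR⟩ := hK.subset_closedBall y
  refine (ha.abs.mul_right (max R 0)).of_norm_bounded fun n => ?_
  rw [norm_mul, Real.norm_eq_abs, Real.norm_of_nonneg infDist_nonneg]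
  gcongr
  rcases (K n).eq_empty_or_nonempty with h | ⟨z, hz⟩
  · simp [h]
  · exact (infDist_le_dist_of_mem hz).trans
      ((mem_closedBall'.1 (hR (mem_iUnion_of_mem n hz))).trans (le_max_left R 0))

section InnerProductSpace

variable {E : Type*} [NormedAddCommGroup E] [InnerProductSpace ℝ E]

open scoped RealInnerProductSpace

theorem differentiableAt_infDist_of_convex {C : Set E} (hC : Convex ℝ C) (hCc : IsComplete C)
    {x : E} (hx : x ∉ C) : DifferentiableAt ℝ (infDist · C) x := by
  rcases C.eq_empty_or_nonempty with rfl | hne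
  · simp only [infDist_empty]
    exact differentiableAt_const 0
  obtain ⟨p, hp, hpmin⟩ := exists_norm_eq_iInf_of_complete_convex hne hCc hC x
  have hproj := (norm_eq_iInf_iff_real_inner_le_zero hC hp).1 hpmin
  have hxp : x - p ≠ 0 := sub_ne_zero.2 fun h => hx (h ▸ hp)
  set w : E := ‖x - p‖⁻¹ • (x - p)
  have hlow : ∀ y, ⟪w, y - p⟫ ≤ infDist y C := fun y => by
    refine (le_infDist hne).2 fun z hz => ?_
    have hwz : ⟪w, z - p⟫ ≤ 0 := by
      rw [real_inner_smul_left]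
      exact mul_nonpos_of_nonneg_of_nonpos (by positivity) (hproj z hz)
    calc ⟪w, y - p⟫ = ⟪w, y - z⟫ + ⟪w, z - p⟫ := by rw [← inner_add_right, sub_add_sub_cancel]
      _ ≤ ‖w‖ * ‖y - z‖ + 0 := add_le_add (real_inner_le_norm _ _) hwz
      _ = dist y z := by
        rw [norm_smul, norm_inv, norm_norm, inv_mul_cancel₀ (norm_ne_zero_iff.2 hxp), one_mul,
          add_zero, dist_eq_norm]
  have hup : ∀ y, infDist y C ≤ ‖y - p‖ := fun y =>
    dist_eq_norm y p ▸ infDist_le_dist_of_mem hp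
  have hx_eq : ‖x - p‖ = ⟪w, x - p⟫ := by
    rw [real_inner_smul_left, real_inner_self_eq_norm_sq, sq,
      inv_mul_cancel_left₀ (norm_ne_zero_iff.2 hxp)]
  exact ((differentiableAt_id.sub_const p).norm ℝ hxp).of_le_of_le
    ((differentiableAt_const w).inner ℝ (differentiableAt_id.sub_const p)) hlow hup hx_eq

theorem infDist_add_smul_eq_abs {S : Set E} {x v : E} (hx : x ∈ S) (hv : ‖v‖ = 1)
    (hS : ∀ z ∈ S, ⟪z - x, v⟫ = 0) (t : ℝ) : infDist (x + t • v) S = |t| := by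
  refine le_antisymm ?_ ((le_infDist ⟨x, hx⟩).2 fun z hz => ?_)
  · simpa [dist_eq_norm, norm_smul, hv] using infDist_le_dist_of_mem (x := x + t • v) hx
  · have hinner : ⟪x + t • v - z, v⟫ = t := by
      rw [show x + t • v - z = t • v - (z - x) by abel, inner_sub_left, hS z hz,
        real_inner_smul_left, real_inner_self_eq_norm_sq, hv]
      ring
    calc |t| = |⟪x + t • v - z, v⟫| := by rw [hinner]
      _ ≤ ‖x + t • v - z‖ * ‖v‖ := abs_real_inner_le_norm _ _
      _ = dist (x + t • v) z := by rw [hv, mul_one, dist_eq_norm]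

theorem inner_sub_eq_zero_of_mem_segment {p q x z v : E} (hv : ⟪q - p, v⟫ = 0)
    (hx : x ∈ segment ℝ p q) (hz : z ∈ segment ℝ p q) : ⟪z - x, v⟫ = 0 := by
  rw [segment_eq_image'] at hx hz
  obtain ⟨s, -, rfl⟩ := hx
  obtain ⟨r, -, rfl⟩ := hz
  rw [add_sub_add_left_eq_sub, ← sub_smul, real_inner_smul_left, hv, mul_zero]

theorem exists_norm_eq_one_inner_eq_zero [FiniteDimensional ℝ E] (hE : 2 ≤ Module.finrank ℝ E)
    (w : E) : ∃ v : E, ‖v‖ = 1 ∧ ⟪w, v⟫ = 0 := by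
  have hrank : 0 < Module.finrank ℝ (ℝ ∙ w)ᗮ := by
    have := (ℝ ∙ w).finrank_add_finrank_orthogonal
    have : Module.finrank ℝ (ℝ ∙ w) ≤ 1 := (finrank_span_le_card ({w} : Set E)).trans (by simp)
    omega
  obtain ⟨v, hv, hv0⟩ :=
    Submodule.exists_mem_ne_zero_of_ne_bot (Submodule.one_le_finrank_iff.1 hrank)
  refine ⟨‖v‖⁻¹ • v, norm_smul_inv_norm hv0, ?_⟩
  rw [real_inner_smul_right, Submodule.mem_orthogonal_singleton_iff_inner_right.1 hv, mul_zero]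

variable {K : ℕ → Set E} {a : ℕ → ℝ}

theorem not_differentiableAt_tsum_mul_infDist (ha : ∀ n, 0 ≤ a n)
    (hsum : ∀ y, Summable fun n => a n * infDist y (K n)) (hK : ∀ n, Convex ℝ (K n))
    {j : ℕ} (haj : 0 < a j) {x v : E} (hx : x ∈ K j) (hv : ‖v‖ = 1)
    (hperp : ∀ z ∈ K j, ⟪z - x, v⟫ = 0) :
    ¬ DifferentiableAt ℝ (fun y => ∑' n, a n * infDist y (K n)) x := by
  intro hdiff
  have hdiff' : DifferentiableAt ℝ (fun y => ∑' n, a n * infDist y (K n))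
      (x + (0 : ℝ) • v) := by
    rwa [zero_smul, add_zero]
  have hline : DifferentiableAt ℝ (fun t : ℝ => ∑' n, a n * infDist (x + t • v) (K n)) 0 :=
    hdiff'.comp (0 : ℝ) ((differentiableAt_id.smul_const v).const_add x)
  refine not_differentiableAt_of_mul_abs_le (mul_pos two_pos haj) (fun t => ?_) hline
  simp only [zero_smul, add_zero]
  have hmid : ∀ n,
      2 * infDist x (K n) ≤ infDist (x + t • v) (K n) + infDist (x + (-t) • v) (K n) := by
    intro n
    have := (convexOn_infDist (hK n)).2 (mem_univ (x + t • v)) (mem_univ (x + (-t) • v))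
      (by norm_num : (0 : ℝ) ≤ 1 / 2) (by norm_num : (0 : ℝ) ≤ 1 / 2) (by norm_num)
    rw [show (1 / 2 : ℝ) • (x + t • v) + (1 / 2 : ℝ) • (x + (-t) • v) = x by module,
      smul_eq_mul, smul_eq_mul] at this
    linarith
  set g : ℕ → ℝ := fun n => a n * infDist (x + t • v) (K n) + a n * infDist (x + (-t) • v) (K n)
    - 2 * (a n * infDist x (K n))
  have hg : g j = 2 * a j * |t| := by
    simp only [g, infDist_add_smul_eq_abs hx hv hperp, abs_neg, infDist_zero_of_mem hx]
    ring
  have hsum_g : ∑' n, g n = ∑' n, a n * infDist (x + t • v) (K n)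
      + ∑' n, a n * infDist (x + (-t) • v) (K n) - 2 * ∑' n, a n * infDist x (K n) := by
    rw [Summable.tsum_sub ((hsum _).add (hsum _)) ((hsum x).mul_left 2),
      Summable.tsum_add (hsum _) (hsum _), tsum_mul_left]
  rw [← hsum_g, ← hg]
  exact (((hsum _).add (hsum _)).sub ((hsum x).mul_left 2)).le_tsum j fun n _ => by
    linarith [mul_le_mul_of_nonneg_left (hmid n) (ha n)]

theorem differentiableAt_tsum_mul_infDist (ha : Summable a) (hK : ∀ n, Convex ℝ (K n))
    (hKc : ∀ n, IsComplete (K n)) (hsum : ∀ y, Summable fun n => a n * infDist y (K n))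
    {x : E} (hx : x ∉ closure (⋃ n, K n)) :
    DifferentiableAt ℝ (fun y => ∑' n, a n * infDist y (K n)) x := by
  obtain ⟨ε, hε, hball⟩ := Metric.isOpen_iff.1 isClosed_closure.isOpen_compl x hx
  have hoff : ∀ n, ∀ y ∈ ball x ε, y ∉ K n := fun n y hy hyK =>
    hball hy (subset_closure (mem_iUnion_of_mem n hyK))
  refine (hasFDerivAt_tsum_of_isPreconnected (f := fun n y => a n * infDist y (K n))
    (f' := fun n y => a n • fderiv ℝ (infDist · (K n)) y)
    ha.abs isOpen_ball (convex_ball x ε).isPreconnected (fun n y hy => ?_) (fun n y _ => ?_)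
    (mem_ball_self hε) (hsum x) (mem_ball_self hε)).differentiableAt
  · exact (differentiableAt_infDist_of_convex (hK n) (hKc n) (hoff n y hy)).hasFDerivAt.const_mul
      (a n)
  · have h1 : ‖fderiv ℝ (infDist · (K n)) y‖ ≤ 1 := by
      simpa using norm_fderiv_le_of_lipschitz ℝ (lipschitz_infDist_pt (s := K n)) (x₀ := y)
    rw [norm_smul, Real.norm_eq_abs]
    exact mul_le_of_le_one_right (abs_nonneg _) h1

end InnerProductSpace

/-- For a sequence of segments `K_j ⊆ ℝ²` with compact union `K`, the function
`u = Σ_j 2^{-j} d(K_j, ·)` is not differentiable at any point of `K`; consequently its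
singular set (the set of non-differentiability points) equals exactly `K`. -/
theorem stmt_13 (K : ℕ → Set (EuclideanSpace ℝ (Fin 2)))
    (hseg : ∀ j, ∃ p q : EuclideanSpace ℝ (Fin 2), K j = segment ℝ p q)
    (hcomp : IsCompact (⋃ j, K j))
    (u : EuclideanSpace ℝ (Fin 2) → ℝ)
    (hu : u = fun x => ∑' j : ℕ, ((1 : ℝ) / 2) ^ (j + 1) * infDist x (K j)) :
    (∀ x ∈ ⋃ j, K j, ¬ DifferentiableAt ℝ u x) ∧
    {x | ¬ DifferentiableAt ℝ u x} = ⋃ j, K j := by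
  subst hu
  have hconv : ∀ j, Convex ℝ (K j) := fun j => by
    obtain ⟨p, q, hpq⟩ := hseg j
    exact hpq ▸ convex_segment p q
  have hcomplete : ∀ j, IsComplete (K j) := fun j => by
    obtain ⟨p, q, hpq⟩ := hseg j
    exact hpq ▸ (isCompact_segment p q).isComplete
  have ha : Summable fun j : ℕ => ((1 : ℝ) / 2) ^ (j + 1) :=
    (summable_nat_add_iff 1).2 summable_geometric_two
  have hsum := summable_mul_infDist ha hcomp.isBounded
  have hsing : ∀ x ∈ ⋃ j, K j, ¬ DifferentiableAt ℝ
      (fun x => ∑' j : ℕ, ((1 : ℝ) / 2) ^ (j + 1) * infDist x (K j)) x := by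
    intro x hx
    obtain ⟨j, hxj⟩ := mem_iUnion.1 hx
    obtain ⟨p, q, hpq⟩ := hseg j
    obtain ⟨v, hv, hvpq⟩ := exists_norm_eq_one_inner_eq_zero (by simp) (q - p)
    refine not_differentiableAt_tsum_mul_infDist (fun n => by positivity) hsum hconv
      (by positivity) hxj hv fun z hz => ?_
    rw [hpq] at hxj hz
    exact inner_sub_eq_zero_of_mem_segment hvpq hxj hz
  refine ⟨hsing, Set.ext fun x => ⟨fun hx => ?_, hsing x⟩⟩
  by_contra hxK
  exact hx (differentiableAt_tsum_mul_infDist ha hconv hcomplete hsum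
    (by rwa [hcomp.isClosed.closure_eq]))
end

section
/- Let v₀(x,y) := x²/2 + |y| on ℝ², let φ : ℝ → ℝ be a smooth even convex function with φ(y) = |y| for |y| ≥ 1, let (a,b) ⊆ ℝ be a bounded open interval with b - a ≤ 1, and let r(x) := (x-a)²(x-b)² for x ∈ (a,b). Then the function v(x,y) defined as x²/2 + r(x)·φ(y/r(x)) for x ∈ (a,b), and as v₀(x,y) otherwise, is convex on ℝ². -/
open Set Filter Asymptotics

section Aux

/-- A function that is everywhere touched from below by a convex minorant is convex. -/
lemma convexOn_of_exists_support {E : Type*} [AddCommGroup E] [Module ℝ E] {v : E → ℝ}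
    (h : ∀ z, ∃ g : E → ℝ, ConvexOn ℝ univ g ∧ (∀ w, g w ≤ v w) ∧ g z = v z) :
    ConvexOn ℝ univ v := by
  refine ⟨convex_univ, fun p _ q _ α β hα hβ hαβ => ?_⟩
  obtain ⟨g, hgc, hgle, hgeq⟩ := h (α • p + β • q)
  have h1 := hgc.2 (mem_univ p) (mem_univ q) hα hβ hαβ
  have h2 : α • g p + β • g q ≤ α • v p + β • v q := by
    simp only [smul_eq_mul]
    have h3 := mul_le_mul_of_nonneg_left (hgle p) hα
    have h4 := mul_le_mul_of_nonneg_left (hgle q) hβ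
    linarith
  calc v (α • p + β • q) = g (α • p + β • q) := hgeq.symm
    _ ≤ α • g p + β • g q := h1
    _ ≤ α • v p + β • v q := h2

lemma sq_isLittleO (c : ℝ) : (fun x : ℝ => (x - c) ^ 2) =o[nhds c] fun x => x - c := by
  rw [Asymptotics.isLittleO_iff]
  intro e he
  filter_upwards [Metric.ball_mem_nhds c he] with x hx
  rw [Metric.mem_ball, Real.dist_eq] at hx
  have h1 : |(x - c) ^ 2| = |x - c| * |x - c| := by
    rw [abs_pow]; ring
  rw [Real.norm_eq_abs, Real.norm_eq_abs, h1]
  exact mul_le_mul_of_nonneg_right hx.le (abs_nonneg _)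

lemma hasDerivAt_zero_of_sq_bound {F : ℝ → ℝ} {c C : ℝ}
    (h : ∀ x, |F x| ≤ C * (x - c) ^ 2) : HasDerivAt F 0 c := by
  have hFc : F c = 0 := by
    have := h c
    simp at this
    exact abs_nonpos_iff.mp (by simpa using this)
  rw [hasDerivAt_iff_isLittleO]
  have hO : (fun x => F x - F c - (x - c) • (0 : ℝ)) =O[nhds c] fun x => (x - c) ^ 2 := by
    refine Asymptotics.IsBigO.of_bound C (Filter.Eventually.of_forall fun x => ?_)
    have := h x
    simp only [hFc, smul_zero, sub_zero, Real.norm_eq_abs]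
    calc |F x| ≤ C * (x - c) ^ 2 := this
      _ = C * |(x - c) ^ 2| := by rw [abs_of_nonneg (sq_nonneg _)]
  exact hO.trans_isLittleO (sq_isLittleO c)

lemma monotone_glue {f : ℝ → ℝ} {a b : ℝ} (hab : a ≤ b) (h1 : MonotoneOn f (Iic a))
    (h2 : MonotoneOn f (Icc a b)) (h3 : MonotoneOn f (Ici b)) : Monotone f := by
  intro x y hxy
  rcases le_total y a with h | h
  · exact h1 (le_trans hxy h) h hxy
  rcases le_total b x with h' | h'
  · exact h3 h' (le_trans h' hxy) hxy
  rcases le_total x a with ha' | ha'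
  · rcases le_total y b with hb' | hb'
    · calc f x ≤ f a := h1 ha' (mem_Iic.mpr le_rfl) ha'
        _ ≤ f y := h2 ⟨le_rfl, hab⟩ ⟨h, hb'⟩ h
    · calc f x ≤ f a := h1 ha' (mem_Iic.mpr le_rfl) ha'
        _ ≤ f b := h2 ⟨le_rfl, hab⟩ ⟨hab, le_rfl⟩ hab
        _ ≤ f y := h3 (mem_Ici.mpr le_rfl) hb' hb'
  · rcases le_total y b with hb' | hb'
    · exact h2 ⟨ha', h'⟩ ⟨h, hb'⟩ hxy
    · calc f x ≤ f b := h2 ⟨ha', h'⟩ ⟨hab, le_rfl⟩ h'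
        _ ≤ f y := h3 (mem_Ici.mpr le_rfl) hb' hb'

/-- Main 1-D convexity lemma: `x²/2 + l·R(x)` is convex for `l ∈ [0,1]`, where `R` is
the polynomial `(x-a)²(x-b)²` clipped to `(a,b)`. -/
lemma fconvex (a b : ℝ) (hab : a < b) (hba : b - a ≤ 1) (l : ℝ) (hl0 : 0 ≤ l) (hl1 : l ≤ 1) :
    ConvexOn ℝ (univ : Set ℝ)
      (fun x : ℝ => x ^ 2 / 2 + l * (if a < x ∧ x < b then (x - a) ^ 2 * (x - b) ^ 2 else 0)) := by
  set R : ℝ → ℝ := fun x => if a < x ∧ x < b then (x - a) ^ 2 * (x - b) ^ 2 else 0 with hR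
  set D : ℝ → ℝ :=
    fun x => x + l * (if a < x ∧ x < b then 2 * (x - a) * (x - b) * (2 * x - a - b) else 0)
    with hD
  have hx2 : ∀ x : ℝ, HasDerivAt (fun x : ℝ => x ^ 2 / 2) x x := by
    intro x
    have h := (hasDerivAt_pow 2 x).div_const 2
    exact h.congr_deriv (by norm_num)
  -- quadratic bounds for R at the endpoints
  have hbndA : ∀ x, |R x| ≤ (b - a) ^ 2 * (x - a) ^ 2 := by
    intro x
    simp only [hR]
    by_cases h : a < x ∧ x < b
    · rw [if_pos h, abs_of_nonneg (by positivity)]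
      nlinarith [mul_nonneg (mul_nonneg (sub_nonneg.2 h.1.le)
        (show (0:ℝ) ≤ 2 * b - a - x by linarith [h.2])) (sq_nonneg (x - a))]
    · rw [if_neg h]
      simp only [abs_zero]
      positivity
  have hbndB : ∀ x, |R x| ≤ (b - a) ^ 2 * (x - b) ^ 2 := by
    intro x
    simp only [hR]
    by_cases h : a < x ∧ x < b
    · rw [if_pos h, abs_of_nonneg (by positivity)]
      nlinarith [mul_nonneg (mul_nonneg (sub_nonneg.2 h.2.le)
        (show (0:ℝ) ≤ b + x - 2 * a by linarith [h.1])) (sq_nonneg (x - b))]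
    · rw [if_neg h]
      simp only [abs_zero]
      positivity
  have hderiv : ∀ x, HasDerivAt (fun x => x ^ 2 / 2 + l * R x) (D x) x := by
    intro x
    rcases lt_trichotomy x a with hxa | hxa | hax
    · have hcond : ¬(a < x ∧ x < b) := fun h => absurd hxa (not_lt.2 h.1.le)
      have hev : (fun x => x ^ 2 / 2 + l * R x) =ᶠ[nhds x] fun x => x ^ 2 / 2 := by
        filter_upwards [Iio_mem_nhds hxa] with y hy
        have : ¬(a < y ∧ y < b) := fun h => absurd h.1 (not_lt.2 hy.le)
        simp [hR, this]
      have h := (hx2 x).congr_of_eventuallyEq hev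
      have hDx : D x = x := by simp [hD, hcond]
      rw [hDx]; exact h
    · -- x = a
      rw [hxa]
      have hRa : HasDerivAt R 0 a := hasDerivAt_zero_of_sq_bound hbndA
      have h := (hx2 a).add (hRa.const_mul l)
      have hcond : ¬(a < a ∧ a < b) := fun h => lt_irrefl a h.1
      have hDx : D a = a + l * 0 := by simp [hD, hcond]
      rw [hDx]; exact h
    rcases lt_trichotomy x b with hxb | hxb | hbx
    · -- interior
      have h1 : HasDerivAt (fun x : ℝ => (x - a) ^ 2 * (x - b) ^ 2)
          (2 * (x - a) * (x - b) * (2 * x - a - b)) x := by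
        have ha' : HasDerivAt (fun x : ℝ => (x - a) ^ 2) (2 * (x - a)) x := by
          have h := ((hasDerivAt_id x).sub_const a).pow 2
          exact h.congr_deriv (by norm_num)
        have hb' : HasDerivAt (fun x : ℝ => (x - b) ^ 2) (2 * (x - b)) x := by
          have h := ((hasDerivAt_id x).sub_const b).pow 2
          exact h.congr_deriv (by norm_num)
        have h := ha'.mul hb'
        exact h.congr_deriv (by ring)
      have hpoly : HasDerivAt (fun x => x ^ 2 / 2 + l * ((x - a) ^ 2 * (x - b) ^ 2))
          (x + l * (2 * (x - a) * (x - b) * (2 * x - a - b))) x :=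
        (hx2 x).add (h1.const_mul l)
      have hev : (fun x => x ^ 2 / 2 + l * R x)
          =ᶠ[nhds x] fun x => x ^ 2 / 2 + l * ((x - a) ^ 2 * (x - b) ^ 2) := by
        filter_upwards [Ioo_mem_nhds hax hxb] with y hy
        simp [hR, hy.1, hy.2]
      have h := hpoly.congr_of_eventuallyEq hev
      have hDx : D x = x + l * (2 * (x - a) * (x - b) * (2 * x - a - b)) := by
        simp [hD, hax, hxb]
      rw [hDx]; exact h
    · -- x = b
      rw [hxb]
      have hRb : HasDerivAt R 0 b := hasDerivAt_zero_of_sq_bound hbndB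
      have h := (hx2 b).add (hRb.const_mul l)
      have hcond : ¬(a < b ∧ b < b) := fun h => lt_irrefl b h.2
      have hDx : D b = b + l * 0 := by simp [hD, hcond]
      rw [hDx]; exact h
    · have hcond : ¬(a < x ∧ x < b) := fun h => absurd hbx (not_lt.2 h.2.le)
      have hev : (fun x => x ^ 2 / 2 + l * R x) =ᶠ[nhds x] fun x => x ^ 2 / 2 := by
        filter_upwards [Ioi_mem_nhds hbx] with y hy
        have : ¬(a < y ∧ y < b) := fun h => absurd h.2 (not_lt.2 hy.le)
        simp [hR, this]
      have h := (hx2 x).congr_of_eventuallyEq hev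
      have hDx : D x = x := by simp [hD, hcond]
      rw [hDx]; exact h
  -- monotonicity of D
  set q : ℝ → ℝ := fun y => y + l * (2 * ((y - a) * (y - b) * (2 * y - a - b))) with hq
  have hq' : ∀ x : ℝ, HasDerivAt q
      (1 + l * (2 * ((1 * (x - b) + (x - a) * 1) * (2 * x - a - b) + (x - a) * (x - b) * 2))) x := by
    intro x
    have h1 : HasDerivAt (fun y : ℝ => (y - a) * (y - b)) (1 * (x - b) + (x - a) * 1) x :=
      ((hasDerivAt_id x).sub_const a).mul ((hasDerivAt_id x).sub_const b)
    have hc : HasDerivAt (fun y : ℝ => 2 * y - a - b) 2 x := by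
      have h := (((hasDerivAt_id x).const_mul 2).sub_const a).sub_const b
      exact h.congr_deriv (by norm_num)
    have h2 := h1.mul hc
    exact (hasDerivAt_id x).add ((h2.const_mul 2).const_mul l)
  have hqmono : MonotoneOn q (Icc a b) := by
    apply monotoneOn_of_deriv_nonneg (convex_Icc a b)
    · exact fun x _ => ((hq' x).differentiableAt.continuousAt).continuousWithinAt
    · intro x _
      exact (hq' x).differentiableAt.differentiableWithinAt
    · intro x hx
      rw [interior_Icc] at hx
      rw [(hq' x).deriv]
      nlinarith [mul_nonneg hl0 (sq_nonneg (x - a - (b - x))),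
        mul_nonneg (mul_nonneg (sub_nonneg.2 hl1) (sub_nonneg.2 hx.1.le))
          (sub_nonneg.2 hx.2.le),
        mul_nonneg (sub_nonneg.2 hx.1.le) (sub_nonneg.2 hx.2.le),
        sq_nonneg (x - a - (b - x))]
  have hDeqp : ∀ x ∈ Icc a b, D x = q x := by
    intro x hx
    by_cases h : a < x ∧ x < b
    · simp only [hD, hq, if_pos h]
      ring
    · have hor : x = a ∨ x = b := by
        rcases hx with ⟨h1, h2⟩
        rcases eq_or_lt_of_le h1 with he | h1'
        · exact Or.inl he.symm
        rcases eq_or_lt_of_le h2 with he | h2'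
        · exact Or.inr he
        · exact absurd ⟨h1', h2'⟩ h
      rcases hor with he | he
      · rw [he]
        have hc : ¬(a < a ∧ a < b) := fun h => lt_irrefl a h.1
        simp only [hD, hq, if_neg hc]
        ring
      · rw [he]
        have hc : ¬(a < b ∧ b < b) := fun h => lt_irrefl b h.2
        simp only [hD, hq, if_neg hc]
        ring
  have hDid_lo : ∀ x ≤ a, D x = x := by
    intro x hx
    have hc : ¬(a < x ∧ x < b) := fun h => absurd (lt_of_lt_of_le h.1 hx) (lt_irrefl a)
    simp [hD, hc]
  have hDid_hi : ∀ x, b ≤ x → D x = x := by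
    intro x hx
    have hc : ¬(a < x ∧ x < b) := fun h => absurd (lt_of_le_of_lt hx h.2) (lt_irrefl b)
    simp [hD, hc]
  have hDm : Monotone D := by
    apply monotone_glue hab.le
    · intro x hx y hy hxy
      rw [hDid_lo x hx, hDid_lo y hy]; exact hxy
    · intro x hx y hy hxy
      rw [hDeqp x hx, hDeqp y hy]; exact hqmono hx hy hxy
    · intro x hx y hy hxy
      rw [hDid_hi x hx, hDid_hi y hy]; exact hxy
  refine MonotoneOn.convexOn_of_deriv convex_univ ?_ ?_ ?_
  · exact fun x _ => ((hderiv x).differentiableAt.continuousAt).continuousWithinAt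
  · intro x _
    exact (hderiv x).differentiableAt.differentiableWithinAt
  · have hde : deriv (fun x => x ^ 2 / 2 + l * R x) = D := funext fun x => (hderiv x).deriv
    rw [interior_univ, hde]
    exact hDm.monotoneOn _

end Aux

/-- Convexity of the basic building block: with `v₀(x,y) = x²/2 + |y|`, a smooth even convex
`φ` equal to `|·|` outside `(-1,1)`, an interval `(a,b)` of length at most 1 and
`r(x) = (x-a)²(x-b)²`, the function equal to `x²/2 + r(x)·φ(y/r(x))` on the strip
`(a,b) × ℝ` and to `v₀` elsewhere is convex on `ℝ²`. -/
theorem stmt_14 (φ : ℝ → ℝ) (hφs : ContDiff ℝ (⊤ : ℕ∞) φ) (hφe : ∀ y, φ (-y) = φ y)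
    (hφc : ConvexOn ℝ univ φ) (hφa : ∀ y : ℝ, 1 ≤ |y| → φ y = |y|)
    (a b : ℝ) (hab : a < b) (hba : b - a ≤ 1)
    (v : ℝ × ℝ → ℝ)
    (hv : v = fun p => if a < p.1 ∧ p.1 < b then
        p.1 ^ 2 / 2 + ((p.1 - a) ^ 2 * (p.1 - b) ^ 2) *
          φ (p.2 / ((p.1 - a) ^ 2 * (p.1 - b) ^ 2))
      else p.1 ^ 2 / 2 + |p.2|) :
    ConvexOn ℝ univ v := by
  subst hv
  have hφd : Differentiable ℝ φ := hφs.differentiable (by simp)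
  -- tangent lines lie below the graph
  have htan : ∀ z w : ℝ, deriv φ z * (w - z) + φ z ≤ φ w := by
    intro z w
    rcases lt_trichotomy w z with h | rfl | h
    · have hs := hφc.slope_le_deriv (mem_univ w) (mem_univ z) h (hφd z)
      rw [slope_def_field] at hs
      rw [div_le_iff₀ (by linarith : (0:ℝ) < z - w)] at hs
      nlinarith [hs]
    · simp
    · have hs := hφc.deriv_le_slope (mem_univ z) (mem_univ w) h (hφd z)
      rw [slope_def_field] at hs
      rw [le_div_iff₀ (by linarith : (0:ℝ) < w - z)] at hs
      nlinarith [hs]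
  -- φ dominates |·|
  have habs : ∀ z, |z| ≤ φ z := by
    have h1 : ∀ z : ℝ, z ≤ φ z := by
      intro z
      set N := |z| + 2 with hN
      have hN1 : (1:ℝ) < N := by have := abs_nonneg z; rw [hN]; linarith
      have hzN : z < N := by have := le_abs_self z; rw [hN]; linarith
      have hdN : deriv φ N = 1 := by
        have hev : φ =ᶠ[nhds N] fun y => y := by
          filter_upwards [Ioi_mem_nhds hN1] with y hy
          simp only [mem_Ioi] at hy
          rw [hφa y (by rw [abs_of_pos (by linarith : (0:ℝ) < y)]; linarith)]
          exact abs_of_pos (by linarith)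
        rw [hev.deriv_eq]
        simp
      have ht := htan N z
      rw [hdN, hφa N (by rw [abs_of_pos (by linarith : (0:ℝ) < N)]; linarith),
        abs_of_pos (by linarith : (0:ℝ) < N)] at ht
      linarith
    intro z
    rcases abs_cases z with ⟨h, _⟩ | ⟨h, _⟩
    · rw [h]; exact h1 z
    · rw [h]
      have := h1 (-z)
      rw [hφe] at this
      exact this
  -- φ 0 ≤ 1
  have hφ0 : φ 0 ≤ 1 := by
    have h2 := hφc.2 (mem_univ (-1 : ℝ)) (mem_univ (1 : ℝ))
      (by norm_num : (0:ℝ) ≤ 1/2) (by norm_num : (0:ℝ) ≤ 1/2) (by norm_num)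
    have e1 : φ (-1 : ℝ) = 1 := by rw [hφa (-1) (by norm_num)]; norm_num
    have e2 : φ (1 : ℝ) = 1 := by rw [hφa 1 (by norm_num)]; norm_num
    simp only [smul_eq_mul] at h2
    norm_num [e1, e2] at h2
    convert h2 using 2 <;> norm_num
  -- derivative of φ is bounded by 1 in absolute value
  have hderiv_bound : ∀ z, |deriv φ z| ≤ 1 := by
    have hmono : MonotoneOn (deriv φ) univ :=
      hφc.monotoneOn_deriv (fun x _ => hφd x)
    intro z
    set M := |z| + 2 with hM
    have hM1 : (1:ℝ) < M := by have := abs_nonneg z; rw [hM]; linarith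
    have hzM : z < M := by have := le_abs_self z; rw [hM]; linarith
    have hzM' : -M < z := by have := neg_abs_le z; rw [hM]; linarith
    have hdM : deriv φ M = 1 := by
      have hev : φ =ᶠ[nhds M] fun y => y := by
        filter_upwards [Ioi_mem_nhds hM1] with y hy
        simp only [mem_Ioi] at hy
        rw [hφa y (by rw [abs_of_pos (by linarith : (0:ℝ) < y)]; linarith)]
        exact abs_of_pos (by linarith)
      rw [hev.deriv_eq]; simp
    have hdM' : deriv φ (-M) = -1 := by
      have hev : φ =ᶠ[nhds (-M)] fun y => -y := by
        filter_upwards [Iio_mem_nhds (by linarith : -M < -1)] with y hy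
        simp only [mem_Iio] at hy
        rw [hφa y (by rw [abs_of_neg (by linarith : y < (0:ℝ))]; linarith)]
        exact abs_of_neg (by linarith)
      rw [hev.deriv_eq]
      simp [deriv_neg]
    have hu := hmono (mem_univ z) (mem_univ M) hzM.le
    have hl := hmono (mem_univ (-M)) (mem_univ z) hzM'.le
    rw [hdM] at hu
    rw [hdM'] at hl
    rw [abs_le]
    exact ⟨hl, hu⟩
  -- main argument: supporting convex minorants
  apply convexOn_of_exists_support
  intro z
  -- choose t (slope in y) and l (coefficient of R)
  have key : ∃ t l : ℝ, 0 ≤ l ∧ l ≤ 1 ∧ |t| ≤ 1 ∧ (∀ w : ℝ, t * w + l ≤ φ w) ∧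
      (l * (if a < z.1 ∧ z.1 < b then (z.1 - a) ^ 2 * (z.1 - b) ^ 2 else 0) + t * z.2 =
        if a < z.1 ∧ z.1 < b then
          ((z.1 - a) ^ 2 * (z.1 - b) ^ 2) * φ (z.2 / ((z.1 - a) ^ 2 * (z.1 - b) ^ 2))
        else |z.2|) := by
    by_cases hz : a < z.1 ∧ z.1 < b
    · -- strip case: tangent to φ at z.2 / r₀
      set r0 := (z.1 - a) ^ 2 * (z.1 - b) ^ 2 with hr0def
      have hr0 : 0 < r0 := by
        have h1 : 0 < (z.1 - a) ^ 2 := pow_pos (by linarith [hz.1]) 2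
        have h2 : 0 < (z.1 - b) ^ 2 :=
          lt_of_le_of_ne (sq_nonneg _) (Ne.symm (pow_ne_zero 2 (by intro h; rw [sub_eq_zero] at h; exact absurd h (ne_of_lt hz.2))))
        exact mul_pos h1 h2
      set zs := z.2 / r0 with hzs
      refine ⟨deriv φ zs, φ zs - deriv φ zs * zs, ?_, ?_, hderiv_bound zs, ?_, ?_⟩
      · -- l ≥ 0
        have h1 := habs zs
        have h2 : deriv φ zs * zs ≤ |zs| := by
          calc deriv φ zs * zs ≤ |deriv φ zs * zs| := le_abs_self _
            _ = |deriv φ zs| * |zs| := abs_mul _ _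
            _ ≤ 1 * |zs| := mul_le_mul_of_nonneg_right (hderiv_bound zs) (abs_nonneg _)
            _ = |zs| := one_mul _
        linarith
      · -- l ≤ 1
        have h1 := htan zs 0
        nlinarith [h1, hφ0]
      · -- tangent below
        intro w
        have h1 := htan zs w
        nlinarith [h1]
      · -- equality at the point
        simp only [if_pos hz]
        have hy : z.2 = zs * r0 := by
          rw [hzs]
          field_simp
        rw [hy]
        ring
    · -- outside the strip
      refine ⟨if 0 ≤ z.2 then 1 else -1, 0, le_rfl, zero_le_one, ?_, ?_, ?_⟩
      · split <;> norm_num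
      · intro w
        have := habs w
        split
        · have := le_abs_self w; linarith
        · have := neg_abs_le w; linarith
      · simp only [if_neg hz, zero_mul, zero_add]
        split
        · rename_i h
          rw [abs_of_nonneg h]; ring
        · rename_i h
          rw [abs_of_neg (not_le.1 h)]; ring
  obtain ⟨t, l, hl0, hl1, ht, htw, heq⟩ := key
  refine ⟨fun w : ℝ × ℝ =>
    (w.1 ^ 2 / 2 + l * (if a < w.1 ∧ w.1 < b then (w.1 - a) ^ 2 * (w.1 - b) ^ 2 else 0))
      + t * w.2, ?_, ?_, ?_⟩
  · -- convexity of g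
    have hf := fconvex a b hab hba l hl0 hl1
    refine ⟨convex_univ, fun p _ q _ α β hα hβ hαβ => ?_⟩
    have h1 := hf.2 (mem_univ p.1) (mem_univ q.1) hα hβ hαβ
    simp only [Prod.fst_add, Prod.snd_add, Prod.smul_fst, Prod.smul_snd, smul_eq_mul] at *
    have h2 : t * (α * p.2 + β * q.2) = α * (t * p.2) + β * (t * q.2) := by ring
    linarith
  · -- g ≤ v everywhere
    intro w
    by_cases hw : a < w.1 ∧ w.1 < b
    · simp only [if_pos hw]
      set Rx := (w.1 - a) ^ 2 * (w.1 - b) ^ 2 with hRx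
      have hRp : 0 < Rx := by
        have h1 : 0 < (w.1 - a) ^ 2 := pow_pos (by linarith [hw.1]) 2
        have h2 : 0 < (w.1 - b) ^ 2 :=
          lt_of_le_of_ne (sq_nonneg _) (Ne.symm (pow_ne_zero 2 (by intro h; rw [sub_eq_zero] at h; exact absurd h (ne_of_lt hw.2))))
        exact mul_pos h1 h2
      have h1 := htw (w.2 / Rx)
      have h2 := mul_le_mul_of_nonneg_left h1 hRp.le
      have h3 : Rx * (t * (w.2 / Rx) + l) = t * w.2 + l * Rx := by
        field_simp
        try ring
      rw [h3] at h2
      linarith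
    · simp only [if_neg hw]
      have h1 : t * w.2 ≤ |w.2| := by
        calc t * w.2 ≤ |t * w.2| := le_abs_self _
          _ = |t| * |w.2| := abs_mul _ _
          _ ≤ 1 * |w.2| := mul_le_mul_of_nonneg_right ht (abs_nonneg _)
          _ = |w.2| := one_mul _
      linarith
  · -- equality at z
    by_cases hz : a < z.1 ∧ z.1 < b
    · simp only [if_pos hz] at heq ⊢
      linarith
    · simp only [if_neg hz] at heq ⊢
      linarith
end

section
/- Let S ⊆ ℝ^m, p ∈ S, U an open neighborhood of p, and suppose there is an affine subspace P ⊆ ℝ^m such that the orthogonal projection π onto P restricted to S ∩ U is bi-Lipschitz. Then for any open neighborhood V of p and any diffeomorphism Φ : V → Φ(V) ⊆ ℝ^m, there exist a neighborhood V' ⊆ V ∩ U of p and an affine subspace P' of the same dimension as P such that the orthogonal projection onto P' restricted to Φ(S ∩ V') is bi-Lipschitz. -/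
/-!
Let `T = dΦ_p`, injective because `Ψ` inverts `Φ`, and `W' = (T Wᗮ)ᗮ`, of the same dimension as
`W`. Since `T Wᗮ ⊆ W'ᗮ`, the map `u ↦ π_{W'} (T u)` factors through `π_W`, and it is injective on
`W`, so `‖π_W u‖ ≤ K ‖π_{W'} (T u)‖`. With the bi-Lipschitz hypothesis this gives
`‖q₁ - q₂‖ ≤ L K ‖π_{W'} (T (q₁ - q₂))‖` on `S ∩ U`. Strict differentiability of `Φ` at `p` makes
`‖Φ q₁ - Φ q₂ - T (q₁ - q₂)‖ ≤ ε ‖q₁ - q₂‖` near `p`; for `ε L K < 1` this error does not destroy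
the lower bound, and `Φ` is Lipschitz there, so `π_{W'}` is bi-Lipschitz on the image.
-/

open Set

/-- A map is bi-Lipschitz on a set if it distorts distances by at most a fixed ratio. -/
def BiLipschitzOn {E : Type*} [MetricSpace E] (f : E → E) (s : Set E) : Prop :=
  ∃ L > (0 : ℝ), ∀ x ∈ s, ∀ y ∈ s,
    L⁻¹ * dist x y ≤ dist (f x) (f y) ∧ dist (f x) (f y) ≤ L * dist x y

/-- Orthogonal projection onto the affine subspace `v + W`. -/
noncomputable def affProj {m : ℕ} (W : Submodule ℝ (EuclideanSpace ℝ (Fin m)))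
    (v : EuclideanSpace ℝ (Fin m)) (x : EuclideanSpace ℝ (Fin m)) :
    EuclideanSpace ℝ (Fin m) :=
  v + ((W.orthogonalProjection (x - v) : W) : EuclideanSpace ℝ (Fin m))

open Function Filter Module Submodule Topology
open scoped NNReal

theorem BiLipschitzOn.of_dist_le_of_le_mul {X : Type*} [MetricSpace X] {f : X → X} {s : Set X}
    (K : ℝ) (h_le : ∀ x ∈ s, ∀ y ∈ s, dist (f x) (f y) ≤ dist x y)
    (h_ge : ∀ x ∈ s, ∀ y ∈ s, dist x y ≤ K * dist (f x) (f y)) : BiLipschitzOn f s := by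
  refine ⟨max 1 K, one_pos.trans_le (le_max_left _ _), fun x hx y hy => ⟨?_, ?_⟩⟩
  · rw [inv_mul_le_iff₀ (one_pos.trans_le (le_max_left _ _))]
    exact (h_ge x hx y hy).trans (by gcongr; exact le_max_right _ _)
  · exact (h_le x hx y hy).trans (le_mul_of_one_le_left dist_nonneg (le_max_left _ _))

theorem dist_affProj {m : ℕ} (W : Submodule ℝ (EuclideanSpace ℝ (Fin m)))
    (v x y : EuclideanSpace ℝ (Fin m)) :
    dist (affProj W v x) (affProj W v y) = ‖W.starProjection (x - y)‖ := by
  rw [dist_eq_norm, affProj, affProj, add_sub_add_left_eq_sub, ← AddSubgroupClass.coe_sub,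
    ← map_sub, sub_sub_sub_cancel_right]
  rfl

theorem affProj_zero {m : ℕ} (W : Submodule ℝ (EuclideanSpace ℝ (Fin m))) :
    affProj W 0 = W.starProjection := by
  ext1 x
  rw [affProj, sub_zero, zero_add]
  rfl

theorem BiLipschitzOn.exists_norm_sub_le_mul_norm_starProjection {m : ℕ}
    {W : Submodule ℝ (EuclideanSpace ℝ (Fin m))} {v : EuclideanSpace ℝ (Fin m)}
    {s : Set (EuclideanSpace ℝ (Fin m))} (h : BiLipschitzOn (affProj W v) s) :
    ∃ L > 0, ∀ x ∈ s, ∀ y ∈ s, ‖x - y‖ ≤ L * ‖W.starProjection (x - y)‖ := by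
  obtain ⟨L, hL, hLs⟩ := h
  refine ⟨L, hL, fun x hx y hy => ?_⟩
  have hxy := (hLs x hx y hy).1
  rwa [dist_affProj, dist_eq_norm, inv_mul_le_iff₀ hL] at hxy

theorem injective_fderiv_of_eventually_leftInverse {𝕜 E F : Type*} [NontriviallyNormedField 𝕜]
    [NormedAddCommGroup E] [NormedSpace 𝕜 E] [NormedAddCommGroup F] [NormedSpace 𝕜 F]
    {Φ : E → F} {Ψ : F → E} {p : E} (hΨ : DifferentiableAt 𝕜 Ψ (Φ p))
    (hΦ : DifferentiableAt 𝕜 Φ p) (hinv : ∀ᶠ x in 𝓝 p, Ψ (Φ x) = x) :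
    Injective (fderiv 𝕜 Φ p) := by
  have hid : (fderiv 𝕜 Ψ (Φ p)).comp (fderiv 𝕜 Φ p) = .id 𝕜 E := by
    rw [← fderiv_comp p hΨ hΦ, (show Ψ ∘ Φ =ᶠ[𝓝 p] id from hinv).fderiv_eq, fderiv_id]
  exact LeftInverse.injective fun u => DFunLike.congr_fun hid u

section Linear

variable {E F : Type*} [NormedAddCommGroup E] [InnerProductSpace ℝ E]
  [NormedAddCommGroup F] [InnerProductSpace ℝ F]

theorem starProjection_orthogonal_map_orthogonal_apply_starProjection (T : E →ₗ[ℝ] F)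
    (W : Submodule ℝ E) [W.HasOrthogonalProjection] [(Wᗮ.map T)ᗮ.HasOrthogonalProjection]
    (u : E) :
    (Wᗮ.map T)ᗮ.starProjection (T (W.starProjection u)) = (Wᗮ.map T)ᗮ.starProjection (T u) := by
  rw [← sub_eq_zero, ← map_sub, ← map_sub, starProjection_apply_eq_zero_iff, ← neg_sub, map_neg]
  exact neg_mem <|
    le_orthogonal_orthogonal _ (mem_map_of_mem (W.sub_starProjection_mem_orthogonal u))

theorem exists_norm_starProjection_le_mul_norm_starProjection_orthogonal_map_orthogonal
    [FiniteDimensional ℝ E] [FiniteDimensional ℝ F] {T : E →ₗ[ℝ] F} (hT : Injective T)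
    (W : Submodule ℝ E) :
    ∃ K > 0, ∀ u, ‖W.starProjection u‖ ≤ K * ‖(Wᗮ.map T)ᗮ.starProjection (T u)‖ := by
  let g : W →ₗ[ℝ] F := (Wᗮ.map T)ᗮ.starProjection.toLinearMap ∘ₗ T ∘ₗ W.subtype
  have hg : Injective g := by
    rw [injective_iff_map_eq_zero]
    intro w hw
    have hTw : T w ∈ Wᗮ.map T := by
      rw [← (Wᗮ.map T).orthogonal_orthogonal]
      exact (starProjection_apply_eq_zero_iff _).1 hw
    obtain ⟨w', hw', hTw'⟩ := hTw
    have hwW : (w : E) ∈ W ⊓ Wᗮ := ⟨w.2, hT hTw' ▸ hw'⟩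
    rw [W.inf_orthogonal_eq_bot, Submodule.mem_bot] at hwW
    exact Subtype.ext hwW
  obtain ⟨K, hK, hKg⟩ := g.injective_iff_antilipschitz.1 hg
  refine ⟨K, hK, fun u => ?_⟩
  rw [← starProjection_orthogonal_map_orthogonal_apply_starProjection]
  exact ZeroHomClass.bound_of_antilipschitz g hKg ⟨_, W.starProjection_apply_mem u⟩

theorem finrank_orthogonal_map_orthogonal [FiniteDimensional ℝ E] {T : E →ₗ[ℝ] E}
    (hT : Injective T) (W : Submodule ℝ E) : finrank ℝ (Wᗮ.map T)ᗮ = finrank ℝ W := by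
  have h₁ := (Wᗮ.map T).finrank_add_finrank_orthogonal
  have h₂ := W.finrank_add_finrank_orthogonal
  have h₃ := LinearEquiv.finrank_eq (Wᗮ.equivMapOfInjective T hT)
  omega

theorem biLipschitzOn_starProjection_image_of_approximatesLinearOn {Φ : E → F} {T : E →L[ℝ] F}
    {s : Set E} (W' : Submodule ℝ F) [W'.HasOrthogonalProjection] {C : ℝ} {ε : ℝ≥0}
    (hC : 0 < C) (hεC : C * ε < 1)
    (hT : ∀ x ∈ s, ∀ y ∈ s, ‖x - y‖ ≤ C * ‖W'.starProjection (T (x - y))‖)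
    (hΦ : ApproximatesLinearOn Φ T s ε) : BiLipschitzOn W'.starProjection (Φ '' s) := by
  have h_lower : ∀ x ∈ s, ∀ y ∈ s,
      (1 - C * ε) * ‖x - y‖ ≤ C * ‖W'.starProjection (Φ x - Φ y)‖ := by
    intro x hx y hy
    have h_err : ‖W'.starProjection (Φ x - Φ y - T (x - y))‖ ≤ ε * ‖x - y‖ :=
      (W'.norm_starProjection_apply_le _).trans (hΦ x hx y hy)
    have h_tri := norm_le_norm_add_norm_sub (W'.starProjection (Φ x - Φ y))
      (W'.starProjection (T (x - y)))
    rw [← map_sub] at h_tri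
    nlinarith [hT x hx y hy]
  refine BiLipschitzOn.of_dist_le_of_le_mul ((‖T‖ + ε) * C / (1 - C * ε)) ?_ ?_
  · rintro _ ⟨x, -, rfl⟩ _ ⟨y, -, rfl⟩
    simpa only [dist_eq_norm, ← map_sub] using W'.norm_starProjection_apply_le (Φ x - Φ y)
  · rintro _ ⟨x, hx, rfl⟩ _ ⟨y, hy, rfl⟩
    rw [dist_eq_norm, dist_eq_norm, ← map_sub]
    calc ‖Φ x - Φ y‖ ≤ ‖T (x - y)‖ + ‖Φ x - Φ y - T (x - y)‖ := norm_le_norm_add_norm_sub' _ _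
      _ ≤ (‖T‖ + ε) * ‖x - y‖ := by
          rw [add_mul]
          exact add_le_add (T.le_opNorm _) (hΦ x hx y hy)
      _ ≤ (‖T‖ + ε) * (C * ‖W'.starProjection (Φ x - Φ y)‖ / (1 - C * ε)) := by
          gcongr
          rw [le_div_iff₀ (sub_pos.2 hεC), mul_comm]
          exact h_lower x hx y hy
      _ = _ := by ring

end Linear

theorem stmt_16_general {m : ℕ} (S : Set (EuclideanSpace ℝ (Fin m)))
    (p : EuclideanSpace ℝ (Fin m))
    (U : Set (EuclideanSpace ℝ (Fin m))) (hU : IsOpen U) (hpU : p ∈ U)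
    (W : Submodule ℝ (EuclideanSpace ℝ (Fin m))) (v : EuclideanSpace ℝ (Fin m))
    (hbil : BiLipschitzOn (affProj W v) (S ∩ U))
    (V : Set (EuclideanSpace ℝ (Fin m))) (hV : IsOpen V) (hpV : p ∈ V)
    (Φ Ψ : EuclideanSpace ℝ (Fin m) → EuclideanSpace ℝ (Fin m))
    (hΦ : ContDiffOn ℝ 1 Φ V) (hΦV : IsOpen (Φ '' V))
    (hΨ : ContDiffOn ℝ 1 Ψ (Φ '' V)) (hinv : ∀ x ∈ V, Ψ (Φ x) = x) :
    ∃ V' : Set (EuclideanSpace ℝ (Fin m)), IsOpen V' ∧ p ∈ V' ∧ V' ⊆ V ∩ U ∧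
      ∃ (W' : Submodule ℝ (EuclideanSpace ℝ (Fin m))) (v' : EuclideanSpace ℝ (Fin m)),
        Module.finrank ℝ W' = Module.finrank ℝ W ∧
        BiLipschitzOn (affProj W' v') (Φ '' (S ∩ V')) := by
  obtain ⟨L, hL, hbil⟩ := hbil.exists_norm_sub_le_mul_norm_starProjection
  have hΦp : ContDiffAt ℝ 1 Φ p := hΦ.contDiffAt (hV.mem_nhds hpV)
  set T := fderiv ℝ Φ p
  have hT : Injective T := injective_fderiv_of_eventually_leftInverse
    ((hΨ.contDiffAt (hΦV.mem_nhds ⟨p, hpV, rfl⟩)).differentiableAt one_ne_zero)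
    (hΦp.differentiableAt one_ne_zero) (eventually_of_mem (hV.mem_nhds hpV) hinv)
  obtain ⟨K, hK, hKT⟩ :=
    exists_norm_starProjection_le_mul_norm_starProjection_orthogonal_map_orthogonal
      (T := T.toLinearMap) hT W
  obtain ⟨ε, hε, hεLK⟩ := exists_pos_mul_lt one_pos (L * K)
  lift ε to ℝ≥0 using hε.le
  obtain ⟨t, ht, hΦt⟩ := (hΦp.hasStrictFDerivAt one_ne_zero).approximates_deriv_on_nhds
    (Or.inr (NNReal.coe_pos.1 hε))
  obtain ⟨r, hr, hball⟩ := Metric.mem_nhds_iff.1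
    (inter_mem ht (inter_mem (hV.mem_nhds hpV) (hU.mem_nhds hpU)))
  refine ⟨Metric.ball p r, Metric.isOpen_ball, Metric.mem_ball_self hr, fun x hx => (hball hx).2,
    (Wᗮ.map T.toLinearMap)ᗮ, 0, finrank_orthogonal_map_orthogonal hT W, ?_⟩
  rw [affProj_zero]
  refine biLipschitzOn_starProjection_image_of_approximatesLinearOn _ (C := L * K)
    (by positivity) hεLK ?_ (hΦt.mono_set fun x hx => (hball hx.2).1)
  rintro x ⟨hxS, hx⟩ y ⟨hyS, hy⟩
  calc ‖x - y‖ ≤ L * ‖W.starProjection (x - y)‖ :=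
        hbil x ⟨hxS, (hball hx).2.2⟩ y ⟨hyS, (hball hy).2.2⟩
    _ ≤ L * (K * ‖(Wᗮ.map T.toLinearMap)ᗮ.starProjection (T (x - y))‖) := by gcongr; exact hKT _
    _ = L * K * _ := by ring

/-- Invariance of graphical bi-Lipschitz structure under diffeomorphisms: if the orthogonal
projection onto an affine subspace `v + W` is bi-Lipschitz on `S ∩ U`, then for any
diffeomorphism `Φ` of a neighborhood `V` of `p` there are a smaller neighborhood `V'` of `p`
and an affine subspace `v' + W'` of the same dimension whose orthogonal projection is
bi-Lipschitz on `Φ(S ∩ V')`. -/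
theorem stmt_16 {m : ℕ} (S : Set (EuclideanSpace ℝ (Fin m)))
    (p : EuclideanSpace ℝ (Fin m)) (hpS : p ∈ S)
    (U : Set (EuclideanSpace ℝ (Fin m))) (hU : IsOpen U) (hpU : p ∈ U)
    (W : Submodule ℝ (EuclideanSpace ℝ (Fin m))) (v : EuclideanSpace ℝ (Fin m))
    (hbil : BiLipschitzOn (affProj W v) (S ∩ U))
    (V : Set (EuclideanSpace ℝ (Fin m))) (hV : IsOpen V) (hpV : p ∈ V)
    (Φ Ψ : EuclideanSpace ℝ (Fin m) → EuclideanSpace ℝ (Fin m))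
    (hΦ : ContDiffOn ℝ 1 Φ V) (hΦV : IsOpen (Φ '' V))
    (hΨ : ContDiffOn ℝ 1 Ψ (Φ '' V)) (hinv : ∀ x ∈ V, Ψ (Φ x) = x) :
    ∃ V' : Set (EuclideanSpace ℝ (Fin m)), IsOpen V' ∧ p ∈ V' ∧ V' ⊆ V ∩ U ∧
      ∃ (W' : Submodule ℝ (EuclideanSpace ℝ (Fin m))) (v' : EuclideanSpace ℝ (Fin m)),
        Module.finrank ℝ W' = Module.finrank ℝ W ∧
        BiLipschitzOn (affProj W' v') (Φ '' (S ∩ V')) :=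
  stmt_16_general S p U hU hpU W v hbil V hV hpV Φ Ψ hΦ hΦV hΨ hinv
end
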